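/- For every integer n ≥ 2 and real r > n, the double series Σ_{q=1}^∞ Σ_{p=0}^∞ m_{p,q} / (2q(p+n-1))^r converges, where m_{p,q} is the dimension of H_{p,q}(S^{2n-1}). -/
import Mathlib


/-- The multiplicity `m_{p,q} = dim H_{p,q}(S^{2n-1})` as a real number. -/
noncomputable def mult (n p q : ℕ) : ℝ :=
  if p = 0 then (Nat.choose (n + q - 1) q : ℝ)
  else ((n : ℝ) - 1) * ((n : ℝ) + p + q - 1) / (p * q) *
    (Nat.choose (n + p - 2) (p - 1)) * (Nat.choose (n + q - 2) (q - 1))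

/-- The general term `m_{p,q} / (2q(p+n-1))^r` of the Schatten series, indexed by
`p ≥ 0` and `q ≥ 1` (so `x = (p, q-1)`). -/
noncomputable def schattenTerm (n : ℕ) (r : ℝ) (x : ℕ × ℕ) : ℝ :=
  mult n x.1 (x.2 + 1) / (2 * ((x.2 : ℝ) + 1) * ((x.1 : ℝ) + n - 1)) ^ r

noncomputable def Cc (n : ℕ) : ℝ := ((n : ℝ) + 1) ^ 2 * (n : ℝ) ^ (2 * n)

lemma mult_nonneg (n p q : ℕ) (hn : 2 ≤ n) : 0 ≤ mult n p q := by
  have h2 : (2:ℝ) ≤ n := by exact_mod_cast hn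
  have hp0 : (0:ℝ) ≤ p := Nat.cast_nonneg p
  have hq0 : (0:ℝ) ≤ q := Nat.cast_nonneg q
  unfold mult
  split
  · positivity
  · have h1 : (0:ℝ) ≤ (n : ℝ) - 1 := by linarith
    have h3 : (0:ℝ) ≤ (n : ℝ) + p + q - 1 := by linarith
    positivity

lemma mult_le (n p q : ℕ) (hn : 2 ≤ n) (hq : 1 ≤ q) :
    mult n p q ≤ Cc n * ((p : ℝ) + 1) ^ (n - 1) * (q : ℝ) ^ (n - 1) := by
  have hn2 : (2:ℝ) ≤ n := by exact_mod_cast hn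
  have hq1 : (1:ℝ) ≤ q := by exact_mod_cast hq
  have hP1 : (1:ℝ) ≤ (p:ℝ) + 1 := by
    have : (0:ℝ) ≤ p := Nat.cast_nonneg p
    linarith
  unfold mult Cc
  split_ifs with hp
  · -- p = 0
    subst hp
    simp only [Nat.cast_zero, zero_add, one_pow, mul_one]
    have hsymm : Nat.choose (n + q - 1) q = Nat.choose (n + q - 1) (n - 1) := by
      have := Nat.choose_symm (show q ≤ n + q - 1 by omega)
      rw [show n + q - 1 - q = n - 1 by omega] at this
      exact this.symm
    have h1 : (Nat.choose (n + q - 1) q : ℝ) ≤ ((n + q - 1 : ℕ) : ℝ) ^ (n - 1) := by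
      rw [hsymm]
      exact_mod_cast Nat.choose_le_pow (n + q - 1) (n - 1)
    have hcast : ((n + q - 1 : ℕ) : ℝ) = (n : ℝ) + q - 1 := by
      push_cast [Nat.cast_sub (show 1 ≤ n + q by omega)]; ring
    have h2 : ((n + q - 1 : ℕ) : ℝ) ^ (n - 1) ≤ ((n : ℝ) * q) ^ (n - 1) := by
      apply pow_le_pow_left₀ (by positivity)
      rw [hcast]; nlinarith
    have h3 : ((n : ℝ) * q) ^ (n - 1) = (n : ℝ) ^ (n - 1) * (q : ℝ) ^ (n - 1) :=
      mul_pow _ _ _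
    have h4 : (n : ℝ) ^ (n - 1) ≤ ((n : ℝ) + 1) ^ 2 * (n : ℝ) ^ (2 * n) := by
      calc (n : ℝ) ^ (n - 1) ≤ (n : ℝ) ^ (2 * n) :=
            pow_le_pow_right₀ (by linarith) (by omega)
        _ ≤ ((n : ℝ) + 1) ^ 2 * (n : ℝ) ^ (2 * n) :=
            le_mul_of_one_le_left (by positivity) (by nlinarith)
    calc (Nat.choose (n + q - 1) q : ℝ) ≤ (n : ℝ) ^ (n - 1) * (q : ℝ) ^ (n - 1) := by
          rw [← h3]; exact h1.trans h2
      _ ≤ ((n : ℝ) + 1) ^ 2 * (n : ℝ) ^ (2 * n) * (q : ℝ) ^ (n - 1) := by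
          apply mul_le_mul_of_nonneg_right h4 (by positivity)
  · -- p ≥ 1
    have hp1 : (1:ℝ) ≤ p := by exact_mod_cast Nat.one_le_iff_ne_zero.mpr hp
    have hA : (Nat.choose (n + p - 2) (p - 1) : ℝ) ≤ (n : ℝ) ^ (n - 1) * ((p : ℝ) + 1) ^ (n - 1) := by
      have hsymm : Nat.choose (n + p - 2) (p - 1) = Nat.choose (n + p - 2) (n - 1) := by
        have := Nat.choose_symm (show p - 1 ≤ n + p - 2 by omega)
        rw [show n + p - 2 - (p - 1) = n - 1 by omega] at this
        exact this.symm
      have h1 : (Nat.choose (n + p - 2) (n - 1) : ℝ) ≤ ((n + p - 2 : ℕ) : ℝ) ^ (n - 1) := by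
        exact_mod_cast Nat.choose_le_pow (n + p - 2) (n - 1)
      have hcast : ((n + p - 2 : ℕ) : ℝ) = (n : ℝ) + p - 2 := by
        push_cast [Nat.cast_sub (show 2 ≤ n + p by omega)]; ring
      have h2 : ((n + p - 2 : ℕ) : ℝ) ^ (n - 1) ≤ ((n : ℝ) * ((p : ℝ) + 1)) ^ (n - 1) := by
        apply pow_le_pow_left₀ (by positivity)
        rw [hcast]; nlinarith
      rw [hsymm]
      calc (Nat.choose (n + p - 2) (n - 1) : ℝ) ≤ ((n : ℝ) * ((p : ℝ) + 1)) ^ (n - 1) :=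
            h1.trans h2
        _ = (n : ℝ) ^ (n - 1) * ((p : ℝ) + 1) ^ (n - 1) := mul_pow _ _ _
    have hB : (Nat.choose (n + q - 2) (q - 1) : ℝ) ≤ (n : ℝ) ^ (n - 1) * (q : ℝ) ^ (n - 1) := by
      have hsymm : Nat.choose (n + q - 2) (q - 1) = Nat.choose (n + q - 2) (n - 1) := by
        have := Nat.choose_symm (show q - 1 ≤ n + q - 2 by omega)
        rw [show n + q - 2 - (q - 1) = n - 1 by omega] at this
        exact this.symm
      have h1 : (Nat.choose (n + q - 2) (n - 1) : ℝ) ≤ ((n + q - 2 : ℕ) : ℝ) ^ (n - 1) := by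
        exact_mod_cast Nat.choose_le_pow (n + q - 2) (n - 1)
      have hcast : ((n + q - 2 : ℕ) : ℝ) = (n : ℝ) + q - 2 := by
        push_cast [Nat.cast_sub (show 2 ≤ n + q by omega)]; ring
      have h2 : ((n + q - 2 : ℕ) : ℝ) ^ (n - 1) ≤ ((n : ℝ) * (q : ℝ)) ^ (n - 1) := by
        apply pow_le_pow_left₀ (by positivity)
        rw [hcast]; nlinarith
      rw [hsymm]
      calc (Nat.choose (n + q - 2) (n - 1) : ℝ) ≤ ((n : ℝ) * (q : ℝ)) ^ (n - 1) := h1.trans h2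
        _ = (n : ℝ) ^ (n - 1) * (q : ℝ) ^ (n - 1) := mul_pow _ _ _
    have hS : ((n : ℝ) - 1) * ((n : ℝ) + p + q - 1) / ((p : ℝ) * q) ≤ ((n : ℝ) + 1) ^ 2 := by
      rw [div_le_iff₀ (by positivity)]
      have e1 : (n : ℝ) + p + q - 1 ≤ ((n : ℝ) + 1) * ((p : ℝ) * q) := by
        nlinarith [mul_nonneg (sub_nonneg.2 hp1) (sub_nonneg.2 hq1),
          mul_nonneg (show (0:ℝ) ≤ n by linarith)
            (show (0:ℝ) ≤ (p : ℝ) * q - 1 by nlinarith)]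
      calc ((n : ℝ) - 1) * ((n : ℝ) + p + q - 1)
          ≤ ((n : ℝ) + 1) * (((n : ℝ) + 1) * ((p : ℝ) * q)) :=
            mul_le_mul (by linarith) e1 (by linarith) (by linarith)
        _ = ((n : ℝ) + 1) ^ 2 * ((p : ℝ) * q) := by ring
    have hS0 : (0:ℝ) ≤ ((n : ℝ) - 1) * ((n : ℝ) + p + q - 1) / ((p : ℝ) * q) := by
      have h1 : (0:ℝ) ≤ (n : ℝ) - 1 := by linarith
      have h3 : (0:ℝ) ≤ (n : ℝ) + p + q - 1 := by linarith
      positivity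
    have hA0 : (0:ℝ) ≤ (Nat.choose (n + p - 2) (p - 1) : ℝ) := Nat.cast_nonneg _
    have hB0 : (0:ℝ) ≤ (Nat.choose (n + q - 2) (q - 1) : ℝ) := Nat.cast_nonneg _
    calc ((n : ℝ) - 1) * ((n : ℝ) + p + q - 1) / ((p : ℝ) * q) *
          (Nat.choose (n + p - 2) (p - 1)) * (Nat.choose (n + q - 2) (q - 1))
        ≤ ((n : ℝ) + 1) ^ 2 * ((n : ℝ) ^ (n - 1) * ((p : ℝ) + 1) ^ (n - 1)) *
            ((n : ℝ) ^ (n - 1) * (q : ℝ) ^ (n - 1)) := by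
          apply mul_le_mul (mul_le_mul hS hA hA0 (by positivity)) hB hB0 (by positivity)
      _ = ((n : ℝ) + 1) ^ 2 * ((n : ℝ) ^ (n - 1) * (n : ℝ) ^ (n - 1)) *
            (((p : ℝ) + 1) ^ (n - 1) * (q : ℝ) ^ (n - 1)) := by ring
      _ ≤ ((n : ℝ) + 1) ^ 2 * (n : ℝ) ^ (2 * n) *
            (((p : ℝ) + 1) ^ (n - 1) * (q : ℝ) ^ (n - 1)) := by
          apply mul_le_mul_of_nonneg_right _ (by positivity)
          apply mul_le_mul_of_nonneg_left _ (by positivity)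
          rw [← pow_add]
          exact pow_le_pow_right₀ (by linarith) (by omega)
      _ = ((n : ℝ) + 1) ^ 2 * (n : ℝ) ^ (2 * n) * ((p : ℝ) + 1) ^ (n - 1) *
            (q : ℝ) ^ (n - 1) := by ring

theorem schatten_summable_of_gt (n : ℕ) (hn : 2 ≤ n) (r : ℝ) (hr : (n : ℝ) < r) :
    Summable (schattenTerm n r) := by
  have hn2 : (2:ℝ) ≤ n := by exact_mod_cast hn
  have hr0 : (0:ℝ) ≤ r := by linarith
  set s : ℝ := (n : ℝ) - 1 - r with hs_def
  have hs : s < -1 := by simp only [hs_def]; linarith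
  -- summability of the one-dimensional majorant
  have h1 : Summable (fun k : ℕ => (k : ℝ) ^ s) := Real.summable_nat_rpow.mpr hs
  have h2 : Summable (fun k : ℕ => ((k : ℝ) + 1) ^ s) := by
    have := h1.comp_injective Nat.succ_injective
    simpa [Function.comp_def, Nat.succ_eq_add_one, Nat.cast_add, Nat.cast_one] using this
  have hmaj : Summable (fun x : ℕ × ℕ =>
      Cc n * (((x.1 : ℝ) + 1) ^ s * ((x.2 : ℝ) + 1) ^ s)) :=
    (h2.mul_of_nonneg h2 (fun k => Real.rpow_nonneg (by positivity) s)
      (fun k => Real.rpow_nonneg (by positivity) s)).mul_left (Cc n)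
  apply Summable.of_nonneg_of_le _ _ hmaj
  · intro x
    unfold schattenTerm
    apply div_nonneg (mult_nonneg n x.1 (x.2 + 1) hn)
    apply Real.rpow_nonneg
    nlinarith [Nat.cast_nonneg (α := ℝ) x.1, Nat.cast_nonneg (α := ℝ) x.2]
  · rintro ⟨p, q'⟩
    unfold schattenTerm
    simp only
    set P : ℝ := (p : ℝ) + 1 with hP_def
    set Q : ℝ := (q' : ℝ) + 1 with hQ_def
    have hP : (0:ℝ) < P := by positivity
    have hQ : (0:ℝ) < Q := by positivity
    have hD : Q * P ≤ 2 * Q * ((p : ℝ) + n - 1) := by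
      have : P ≤ 2 * ((p : ℝ) + n - 1) := by simp only [hP_def]; linarith [Nat.cast_nonneg (α := ℝ) p]
      calc Q * P ≤ Q * (2 * ((p : ℝ) + n - 1)) :=
            mul_le_mul_of_nonneg_left this hQ.le
        _ = 2 * Q * ((p : ℝ) + n - 1) := by ring
    have hDr : (Q * P) ^ r ≤ (2 * Q * ((p : ℝ) + n - 1)) ^ r :=
      Real.rpow_le_rpow (by positivity) hD hr0
    have hEr : (0:ℝ) < (Q * P) ^ r := Real.rpow_pos_of_pos (by positivity) r
    have hnum : mult n p (q' + 1) ≤ Cc n * P ^ (n - 1) * Q ^ (n - 1) := by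
      have := mult_le n p (q' + 1) hn (by omega)
      have hc : ((q' + 1 : ℕ) : ℝ) = Q := by push_cast [hQ_def]; ring
      rwa [hc] at this
    have hCc : (0:ℝ) ≤ Cc n := by unfold Cc; positivity
    calc mult n p (q' + 1) / (2 * Q * ((p : ℝ) + n - 1)) ^ r
        ≤ (Cc n * P ^ (n - 1) * Q ^ (n - 1)) / (Q * P) ^ r :=
          div_le_div₀ (by positivity) hnum hEr hDr
      _ = Cc n * (P ^ ((n : ℝ) - 1) / P ^ r * (Q ^ ((n : ℝ) - 1) / Q ^ r)) := by
          have hm : ((n : ℝ) - 1) = ((n - 1 : ℕ) : ℝ) := by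
            push_cast [Nat.cast_sub (show 1 ≤ n by omega)]; ring
          have hPp : P ^ (n - 1) = P ^ ((n : ℝ) - 1) := by
            rw [hm, Real.rpow_natCast]
          have hQp : Q ^ (n - 1) = Q ^ ((n : ℝ) - 1) := by
            rw [hm, Real.rpow_natCast]
          have key : ∀ a b c d e : ℝ, c ≠ 0 → d ≠ 0 →
              e * a * b / (d * c) = e * (a / c * (b / d)) := by
            intro a b c d e hc hd
            field_simp
          rw [hPp, hQp, Real.mul_rpow hQ.le hP.le]
          exact key _ _ _ _ _ (ne_of_gt (Real.rpow_pos_of_pos hP r))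
            (ne_of_gt (Real.rpow_pos_of_pos hQ r))
      _ = Cc n * (P ^ s * Q ^ s) := by
          rw [hs_def, ← Real.rpow_sub hP, ← Real.rpow_sub hQ]
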